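/- Let φ: Γ → B be a strong formal subdivision of rank 0 with Γ lower Eulerian and B Eulerian of rank n, and let x_0, …, x_N list B with weakly increasing ranks, with intermediate posets B_i and intermediate maps φ_i. Then for 0 < i < N, ℓ^Υ_{Γ_{x_i}} · Υ_{[x_i, 1̂)} = Σ_{C a chain of ∂B_i containing some element of φ_i^{-1}(x_i)} u_{ρ(C)} − Σ_{C a chain of ∂B_{i−1} containing x_i} u_{ρ(C)}, where ℓ^Υ denotes the local flag enumerator and [x_i, 1̂) is the half-open interval in B. -/

import Mathlib

open scoped Classical

noncomputable section

namespace CDIndex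

variable {α β : Type}

/-- The natural rank function of a graded poset: `rho x` is one less than the largest
cardinality of a chain contained in `Set.Iic x` (i.e. the length of a maximal chain of
the interval `[0̂, x]`). -/
def rho [PartialOrder α] (x : α) : ℕ :=
  sSup {k : ℕ | ∃ s : Finset α,
    IsChain (· ≤ ·) (s : Set α) ∧ (s : Set α) ⊆ Set.Iic x ∧ s.card = k + 1}

/-- A subset `S` of a poset is graded of rank `n` if every maximal chain of `S`
has exactly `n + 1` elements (i.e. length `n`). -/
def IsGradedSetOfRank [PartialOrder α] (S : Set α) (n : ℕ) : Prop :=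
  ∀ s : Finset α, (s : Set α) ⊆ S → IsChain (· ≤ ·) (s : Set α) →
    (∀ t : Finset α, (t : Set α) ⊆ S → IsChain (· ≤ ·) (t : Set α) → s ⊆ t → s = t) →
    s.card = n + 1

/-- A poset is graded of rank `n` if every maximal chain has length `n`. -/
def IsGradedOfRank (α : Type) [PartialOrder α] (n : ℕ) : Prop :=
  IsGradedSetOfRank (Set.univ : Set α) n

/-- Every interval `[s, t]` with `s < t`, `s, t ∈ S`, has equally many elements of even
rank and of odd rank. -/
def BalancedIntervalsIn [PartialOrder α] (S : Set α) : Prop :=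
  ∀ s ∈ S, ∀ t ∈ S, s < t →
    {y ∈ Set.Icc s t | Even (rho y)}.ncard = {y ∈ Set.Icc s t | Odd (rho y)}.ncard

/-- An Eulerian poset of rank `n`: a graded poset with `0̂` and `1̂` in which every
interval of positive length has equally many elements of each parity of rank. -/
def IsEulerianOfRank (α : Type) [PartialOrder α] (n : ℕ) : Prop :=
  (∃ b : α, ∀ z, b ≤ z) ∧ (∃ t : α, ∀ z, z ≤ t) ∧
    IsGradedOfRank α n ∧ BalancedIntervalsIn (Set.univ : Set α)

/-- A lower Eulerian poset of rank `n`: a graded poset with `0̂` all of whose intervals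
are Eulerian. -/
def IsLowerEulerianOfRank (α : Type) [PartialOrder α] (n : ℕ) : Prop :=
  (∃ b : α, ∀ z, b ≤ z) ∧ IsGradedOfRank α n ∧ BalancedIntervalsIn (Set.univ : Set α)

/-- A lower order ideal `S` (of a poset) which is lower Eulerian of rank `n`. -/
def IsLowerEulerianSetOfRank [PartialOrder α] (S : Set α) (n : ℕ) : Prop :=
  IsGradedSetOfRank S n ∧ BalancedIntervalsIn S

/-- The boundary of (a lower order ideal `S` of) a graded poset of rank `n`: the lower
order ideal generated by the rank `n - 1` elements which are covered by exactly one
element. -/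
def boundaryIn [PartialOrder α] (S : Set α) (n : ℕ) : Set α :=
  {y | y ∈ S ∧ ∃ x ∈ S, rho x = n - 1 ∧ {z ∈ S | x ⋖ z}.ncard = 1 ∧ y ≤ x}

/-- The boundary `∂P` of a graded poset of rank `n`. -/
def boundary (α : Type) [PartialOrder α] (n : ℕ) : Set α :=
  boundaryIn (Set.univ : Set α) n

/-- `α` is a near-Eulerian poset of rank `n`: it is obtained from an Eulerian poset `Q`
of rank `n + 1` by removing the maximal element and one element `q` of rank `n`. -/
def IsNearEulerianOfRank (α : Type) [PartialOrder α] [Finite α] (n : ℕ) : Prop :=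
  ∃ (Q : Type) (_ : PartialOrder Q) (_ : Finite Q) (q top : Q),
    IsEulerianOfRank Q (n + 1) ∧ (∀ z, z ≤ top) ∧ rho q = n ∧ q ≠ top ∧
    Nonempty (α ≃o {x : Q // x ≠ q ∧ x ≠ top})

/-- `α` is (isomorphic to) the boundary of an Eulerian poset, where `α` has rank `n`
(so the Eulerian poset has rank `n + 1`). -/
def IsBoundaryOfEulerianOfRank (α : Type) [PartialOrder α] [Finite α] (n : ℕ) : Prop :=
  ∃ (Q : Type) (_ : PartialOrder Q) (_ : Finite Q) (top : Q),
    IsEulerianOfRank Q (n + 1) ∧ (∀ z, z ≤ top) ∧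
    Nonempty (α ≃o {x : Q // x ≠ top})

/-! ### Strong formal subdivisions -/

/-- A strong formal subdivision (of rank `0`, with the natural rank functions): an
order-preserving, rank-increasing, surjective map which is strongly surjective and
satisfies the alternating-sum condition on fibers. -/
def IsSFS {α β : Type} [PartialOrder α] [PartialOrder β] (φ : α → β) : Prop :=
  Monotone φ ∧ (∀ y, rho y ≤ rho (φ y)) ∧ Function.Surjective φ ∧
  (∀ y x, φ y ≤ x → ∃ y', y ≤ y' ∧ φ y' = x ∧ rho y' = rho x) ∧
  (∀ y x, φ y ≤ x →
    (∑ᶠ y' ∈ {y' | φ y' = x ∧ y ≤ y'}, ((-1 : ℤ) ^ rho y')) = (-1) ^ rho x)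

/-! ### Extensions of posets and poset maps -/

/-- The extension `Π̃ = Π ∪ (B ∖ Γ)` of a poset `Π` over `B`, along a map
`σ : Π → B` whose image is the lower order ideal `Γ = G ⊆ B`.  Elements are either
elements of `Π` (`Sum.inl`) or elements of `B ∖ G` (`Sum.inr`). -/
@[ext] structure ExtP {α β : Type} (σ : α → β) (G : Set β) : Type where
  elt : α ⊕ {x : β // x ∉ G}

namespace ExtP

variable {σ : α → β} {G : Set β}

instance instPartialOrder [PartialOrder α] [PartialOrder β] : PartialOrder (ExtP σ G) where
  le p q := match p, q with
    | ⟨.inl y⟩, ⟨.inl y'⟩ => y ≤ y'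
    | ⟨.inl y⟩, ⟨.inr x⟩ => ∃ y', y ≤ y' ∧ σ y' ≤ (x : β)
    | ⟨.inr _⟩, ⟨.inl _⟩ => False
    | ⟨.inr x⟩, ⟨.inr x'⟩ => x ≤ x'
  le_refl p := by
    rcases p with ⟨y | x⟩
    · exact (le_refl y : y ≤ y)
    · exact (le_refl x : x ≤ x)
  le_trans p q r hpq hqr := by
    rcases p with ⟨yp | xp⟩ <;> rcases q with ⟨yq | xq⟩ <;> rcases r with ⟨yr | xr⟩
    · exact (le_trans (hpq : yp ≤ yq) (hqr : yq ≤ yr) : yp ≤ yr)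
    · obtain ⟨y', h1, h2⟩ := (hqr : ∃ y', yq ≤ y' ∧ σ y' ≤ (xr : β))
      exact (⟨y', le_trans (hpq : yp ≤ yq) h1, h2⟩ : ∃ y', yp ≤ y' ∧ σ y' ≤ (xr : β))
    · exact (hqr : False).elim
    · obtain ⟨y', h1, h2⟩ := (hpq : ∃ y', yp ≤ y' ∧ σ y' ≤ (xq : β))
      exact (⟨y', h1, le_trans h2 (hqr : (xq : β) ≤ (xr : β))⟩ :
        ∃ y', yp ≤ y' ∧ σ y' ≤ (xr : β))
    · exact (hpq : False).elim
    · exact (hpq : False).elim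
    · exact (hqr : False).elim
    · exact (le_trans (hpq : xp ≤ xq) (hqr : xq ≤ xr) : xp ≤ xr)
  le_antisymm p q hpq hqp := by
    rcases p with ⟨yp | xp⟩ <;> rcases q with ⟨yq | xq⟩
    · have h : yp = yq := le_antisymm (hpq : yp ≤ yq) (hqp : yq ≤ yp)
      subst h; rfl
    · exact (hqp : False).elim
    · exact (hpq : False).elim
    · have h : xp = xq := le_antisymm (hpq : xp ≤ xq) (hqp : xq ≤ xp)
      subst h; rfl

/-- The inclusion of `Π` into the extension. -/
def inclDom (y : α) : ExtP σ G := ⟨.inl y⟩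

/-- The inclusion of `B ∖ Γ` into the extension. -/
def inclCompl (x : {x : β // x ∉ G}) : ExtP σ G := ⟨.inr x⟩

/-- The extension `σ̃ : Π̃ → B` of `σ`: it is `σ` on `Π` and the identity on `B ∖ Γ`. -/
def extMap (σ : α → β) (G : Set β) (p : ExtP σ G) : β :=
  match p.elt with
  | .inl y => σ y
  | .inr x => (x : β)

def equivSum : ExtP σ G ≃ α ⊕ {x : β // x ∉ G} where
  toFun := elt
  invFun := mk
  left_inv _ := rfl
  right_inv _ := rfl

instance [Finite α] [Finite β] : Finite (ExtP σ G) := by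
  have := Fintype.ofFinite α
  have := Fintype.ofFinite β
  exact Finite.of_equiv _ (equivSum (σ := σ) (G := G)).symm

end ExtP

/-! ### Intermediate posets and intermediate maps -/

/-- The lower order ideal `{x_0, …, x_i}` determined by a listing `x` of `B`. -/
def Iset {β : Type} {N : ℕ} (x : Fin (N + 1) → β) (i : ℕ) : Set β :=
  x '' {j | (j : ℕ) ≤ i}

/-- The intermediate poset `B_i = φ⁻¹{x_0, …, x_i} ∪ {x_{i+1}, …, x_N}` of a map
`φ : Γ → B` and a listing `x` of `B`. -/
abbrev InterPoset [PartialOrder α] [PartialOrder β] (φ : α → β) {N : ℕ}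
    (x : Fin (N + 1) → β) (i : ℕ) : Type :=
  ExtP (fun y : (φ ⁻¹' Iset x i) => φ (y : α)) (Iset x i)

/-- The intermediate map `φ_i : B_i → B_{i-1}`: it sends `y ∈ φ⁻¹(x_i)` to `x_i` and
every other element to itself. -/
def interMap [PartialOrder α] [PartialOrder β] (φ : α → β) {N : ℕ}
    (x : Fin (N + 1) → β) (i : ℕ) (p : InterPoset φ x i) : InterPoset φ x (i - 1) :=
  match p.elt with
  | .inl y =>
      if h : φ (y : α) ∈ Iset x (i - 1) then ⟨.inl ⟨(y : α), h⟩⟩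
      else ⟨.inr ⟨φ (y : α), h⟩⟩
  | .inr z =>
      ⟨.inr ⟨(z : β), fun hz => z.2 (by
        obtain ⟨j, hj, hje⟩ := hz
        exact ⟨j, le_trans hj (Nat.sub_le i 1), hje⟩)⟩⟩

/-! ### The flag enumerator, the `ab`-index and the `cd`-index -/

variable (K : Type) [Field K] [CharZero K]

/-- The free noncommutative algebra `K⟨a, b⟩`. -/
abbrev FA := FreeAlgebra K (Fin 2)

/-- The letter `a`. -/
def la : FA K := FreeAlgebra.ι K 0

/-- The letter `b`. -/
def lb : FA K := FreeAlgebra.ι K 1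

/-- `c = a + b`. -/
def lc : FA K := la K + lb K

/-- `d = ab + ba`. -/
def ld : FA K := la K * lb K + lb K * la K

/-- The characteristic monomial `u_S = u_1 ⋯ u_n` of a set `S` of ranks, where
`u_i = b` if `i ∈ S` and `u_i = a` otherwise. -/
def uWord (n : ℕ) (S : Set ℕ) : FA K :=
  (List.ofFn fun i : Fin n => if (i : ℕ) + 1 ∈ S then lb K else la K).prod

/-- Chains of the subposet `S` which contain the element `b0` (intended: the minimal
element of `S`). -/
def chainsIn [PartialOrder α] (S : Set α) (b0 : α) : Set (Finset α) :=
  {C | (C : Set α) ⊆ S ∧ IsChain (· ≤ ·) (C : Set α) ∧ b0 ∈ C}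

/-- The flag enumerator `Υ` of the subposet `S` with minimal element `b0`, of rank `n`;
ranks are computed relative to `b0`. -/
def upsSet [PartialOrder α] (S : Set α) (b0 : α) (n : ℕ) : FA K :=
  ∑ᶠ C ∈ chainsIn S b0, uWord K n ((fun y => rho y - rho b0) '' (C : Set α))

/-- The substitution `a ↦ a - b`, `b ↦ b` turning the flag enumerator into the
`ab`-index. -/
def toAB : FA K →ₐ[K] FA K :=
  FreeAlgebra.lift K (fun i : Fin 2 => if i = 0 then la K - lb K else lb K)

/-- The `ab`-index `Ψ` of the subposet `S` with minimal element `b0`, of rank `n`: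
`Ψ(a,b) = Υ(a-b, b)`. -/
def psiS [PartialOrder α] (S : Set α) (b0 : α) (n : ℕ) : FA K :=
  toAB K (upsSet K S b0 n)

/-- The subalgebra `K⟨c, d⟩ ⊆ K⟨a, b⟩` generated by `c = a + b` and `d = ab + ba`. -/
def cdSub : Subalgebra K (FA K) := Algebra.adjoin K {lc K, ld K}
/-- Chains of the subset `S` which contain the (global) minimum of the ambient poset:
by our convention all chains contain `0̂`. -/
def chainsMin [PartialOrder α] (S : Set α) : Set (Finset α) :=
  {C | (C : Set α) ⊆ S ∧ IsChain (· ≤ ·) (C : Set α) ∧ ∃ m ∈ C, ∀ z : α, m ≤ z}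

end CDIndex

/-!
Ranks in the intermediate poset `B_j = φ⁻¹{x_0, …, x_j} ∪ {x_{j+1}, …, x_N}` are the ranks in
`Γ` and in `B`: chains of `B_j` are glued from a chain of `Γ` and a chain of `B`, and strong
surjectivity lifts chains of `B` to `Γ`. For `j < N`, every element of `B_j` other than `1̂`
lies below an element of rank `n - 1`, whose only cover is `1̂`, so `∂B_j = B_j ∖ {1̂}`.

A chain of `∂B_i` meeting the fibre `φ⁻¹(x_i)` is the same as a chain of `Γ_{x_i}` meeting that
fibre followed by a chain of `(x_i, 1̂)`, so the first sum is `F · Υ_{[x_i, 1̂)}` with `F` the sum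
over chains of `Γ_{x_i}` meeting the fibre. A chain of `∂B_{i-1}` through `x_i` is a chain of
`φ⁻¹[0̂, x_i)`, then `x_i`, then a chain of `(x_i, 1̂)`, so the second sum is
`Υ_{φ⁻¹[0̂, x_i)} · b · Υ_{[x_i, 1̂)}`. Finally the chains of `Γ_{x_i}` avoiding the fibre are the
chains of `φ⁻¹[0̂, x_i)`, whose words end in `a`, so `Υ_{Γ_{x_i}} = F + Υ_{φ⁻¹[0̂, x_i)} · a`.
-/

namespace CDIndex

variable {α β : Type}

section Rank

variable [PartialOrder α] [Finite α]

private lemma bddAbove_chain_lengths (x : α) : BddAbove {k : ℕ | ∃ s : Finset α,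
    IsChain (· ≤ ·) (s : Set α) ∧ (s : Set α) ⊆ Set.Iic x ∧ s.card = k + 1} := by
  have := Fintype.ofFinite α
  exact ⟨Fintype.card α, fun k ⟨s, _, _, hs⟩ => by have := s.card_le_univ; omega⟩

lemma card_le_rho_add_one {x : α} {s : Finset α} (hc : IsChain (· ≤ ·) (s : Set α))
    (hs : (s : Set α) ⊆ Set.Iic x) : s.card ≤ rho x + 1 := by
  rcases s.eq_empty_or_nonempty with rfl | hne
  · simp
  · have := le_csSup (bddAbove_chain_lengths x)
      ⟨s, hc, hs, (Nat.sub_add_cancel hne.card_pos).symm⟩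
    unfold rho
    omega

lemma exists_chain_card_eq_rho (x : α) : ∃ s : Finset α, IsChain (· ≤ ·) (s : Set α) ∧
    (s : Set α) ⊆ Set.Iic x ∧ s.card = rho x + 1 := by
  refine Nat.sSup_mem ?_ (bddAbove_chain_lengths x)
  exact ⟨0, {x}, by simp, by simp, by simp⟩

lemma rho_le_of_strictMono {f : α → ℕ} (hf : StrictMono f) (x : α) : rho x ≤ f x := by
  obtain ⟨s, hc, hs, hcard⟩ := exists_chain_card_eq_rho x
  have hinj : Set.InjOn f s := fun y hy z hz hyz => by
    rcases hc.total hy hz with h | h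
    · exact h.eq_or_lt.resolve_right fun h' => (hf h').ne hyz
    · exact (h.eq_or_lt.resolve_right fun h' => (hf h').ne hyz.symm).symm
  have : s.card ≤ (Finset.range (f x + 1)).card :=
    Finset.card_le_card_of_injOn f
      (fun y hy => Finset.mem_range.2 (Nat.lt_succ_of_le (hf.monotone (hs hy)))) hinj
  rw [Finset.card_range] at this
  omega

lemma rho_strictMono : StrictMono (rho : α → ℕ) := by
  intro y x h
  obtain ⟨s, hc, hs, hcard⟩ := exists_chain_card_eq_rho y
  have hx : x ∉ s := fun hx => (hs hx).not_gt h
  have hc' : IsChain (· ≤ ·) ((insert x s : Finset α) : Set α) := by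
    rw [Finset.coe_insert]
    exact hc.insert fun b hb _ => Or.inr ((hs hb).trans h.le)
  have hs' : ((insert x s : Finset α) : Set α) ⊆ Set.Iic x := by
    rw [Finset.coe_insert]
    exact Set.insert_subset le_rfl (hs.trans (Set.Iic_subset_Iic.2 h.le))
  have := card_le_rho_add_one hc' hs'
  rw [Finset.card_insert_of_notMem hx] at this
  omega

lemma rho_mono : Monotone (rho : α → ℕ) := rho_strictMono.monotone

lemma eq_of_le_of_rho_le {y x : α} (h : y ≤ x) (hr : rho x ≤ rho y) : y = x :=
  h.eq_or_lt.resolve_right fun h' => (rho_strictMono h').not_ge hr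

lemma le_of_rho_le_of_isChain {s : Set α} (hs : IsChain (· ≤ ·) s) {a b : α} (ha : a ∈ s)
    (hb : b ∈ s) (h : rho a ≤ rho b) : a ≤ b :=
  (hs.total ha hb).elim id fun hba => (eq_of_le_of_rho_le hba h).ge

lemma exists_greatest_of_isChain {s : Finset α} (hs : IsChain (· ≤ ·) (s : Set α))
    (hne : s.Nonempty) : ∃ m ∈ s, ∀ a ∈ s, a ≤ m := by
  obtain ⟨m, hm, hmax⟩ := s.exists_max_image rho hne
  exact ⟨m, hm, fun a ha => le_of_rho_le_of_isChain hs ha hm (hmax a ha)⟩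

lemma rho_bot [OrderBot α] : rho (⊥ : α) = 0 := by
  obtain ⟨s, -, hs, hcard⟩ := exists_chain_card_eq_rho (⊥ : α)
  have := Finset.card_le_card fun y hy => Finset.mem_singleton.2 (le_bot_iff.1 (hs hy))
  rw [Finset.card_singleton] at this
  omega

lemma eq_bot_of_rho_eq_zero [OrderBot α] {y : α} (h : rho y = 0) : y = ⊥ :=
  (eq_of_le_of_rho_le bot_le (by rw [h, rho_bot])).symm

end Rank

section Graded

variable [PartialOrder α] [Finite α] {n : ℕ}

lemma IsGradedOfRank.exists_superchain_card_eq (hg : IsGradedOfRank α n) {s : Finset α}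
    (hs : IsChain (· ≤ ·) (s : Set α)) :
    ∃ t : Finset α, s ⊆ t ∧ IsChain (· ≤ ·) (t : Set α) ∧ t.card = n + 1 := by
  obtain ⟨M, hM, hsM⟩ := hs.exists_maxChain
  have hMt : ((Set.toFinite M).toFinset : Set α) = M := Set.Finite.coe_toFinset _
  refine ⟨(Set.toFinite M).toFinset, fun a ha => by simpa using hsM ha, by rw [hMt]; exact hM.1,
    hg _ (Set.subset_univ _) (by rw [hMt]; exact hM.1) fun t _ ht hMt' => ?_⟩
  exact Finset.coe_injective (hMt.trans (hM.2 ht (by rw [← hMt]; exact_mod_cast hMt')))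

lemma IsGradedOfRank.rho_top [OrderTop α] (hg : IsGradedOfRank α n) : rho (⊤ : α) = n := by
  obtain ⟨s, hs, -, hcard⟩ := exists_chain_card_eq_rho (⊤ : α)
  obtain ⟨t, hst, ht, htcard⟩ := hg.exists_superchain_card_eq hs
  have := Finset.card_le_card hst
  have := card_le_rho_add_one ht fun y _ => le_top (a := y)
  omega

lemma IsGradedOfRank.rho_lt_of_ne_top [OrderTop α] (hg : IsGradedOfRank α n) {z : α}
    (hz : z ≠ ⊤) : rho z < n :=
  hg.rho_top ▸ rho_strictMono (lt_top_iff_ne_top.2 hz)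

lemma IsGradedOfRank.exists_le_rho_eq_sub_one [OrderTop α] (hg : IsGradedOfRank α n) {z : α}
    (hz : z ≠ ⊤) : ∃ w : α, z ≤ w ∧ rho w = n - 1 := by
  have hzt : IsChain (· ≤ ·) (({z, ⊤} : Finset α) : Set α) := by
    rw [Finset.coe_pair]
    exact IsChain.pair le_top
  obtain ⟨t, hst, ht, htcard⟩ := hg.exists_superchain_card_eq hzt
  have hz' : z ∈ t.erase ⊤ := Finset.mem_erase.2 ⟨hz, hst (by simp)⟩
  have ht' : IsChain (· ≤ ·) ((t.erase ⊤ : Finset α) : Set α) :=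
    ht.mono (Finset.coe_subset.2 (Finset.erase_subset _ _))
  obtain ⟨w, hw, hwmax⟩ := exists_greatest_of_isChain ht' ⟨z, hz'⟩
  have := card_le_rho_add_one ht' fun a ha => hwmax a ha
  rw [Finset.card_erase_of_mem (hst (by simp))] at this
  have := hg.rho_lt_of_ne_top (Finset.mem_erase.1 hw).1
  exact ⟨w, hwmax z hz', by omega⟩

end Graded

lemma boundary_eq_compl_singleton {P : Type} [PartialOrder P] [Finite P] {n : ℕ} {T : P}
    (hT : ∀ z, z ≤ T) (hTn : rho T = n) (hn : 0 < n)
    (hcoatom : ∀ p ≠ T, ∃ q, p ≤ q ∧ rho q = n - 1) : boundary P n = {T}ᶜ := by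
  have hcov : ∀ {q}, rho q = n - 1 → {z | q ⋖ z} = {T} := by
    intro q hq
    have hgt : ∀ z, q < z → z = T := fun z hz =>
      eq_of_le_of_rho_le (hT z) (by have := rho_strictMono hz; omega)
    have hqT : q < T := lt_of_le_of_ne (hT q) fun h => by rw [h] at hq; omega
    ext z
    simp only [Set.mem_ofPred_eq, Set.mem_singleton_iff]
    exact ⟨fun h => hgt z h.lt, fun h => h ▸ ⟨hqT, fun c hqc hcT => (hgt c hqc ▸ hcT).false⟩⟩
  ext p
  simp only [boundary, boundaryIn, Set.mem_ofPred_eq, Set.mem_univ, true_and,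
    Set.mem_compl_singleton_iff]
  constructor
  · rintro ⟨q, hq, -, hpq⟩ rfl
    rw [le_antisymm (hT q) hpq] at hq
    omega
  · intro hp
    obtain ⟨q, hpq, hq⟩ := hcoatom p hp
    exact ⟨q, hq, by rw [hcov hq, Set.ncard_singleton], hpq⟩

structure IsRankedListing [PartialOrder β] {N : ℕ} (x : Fin (N + 1) → β) : Prop where
  bijective : Function.Bijective x
  rho_le_rho : ∀ i j : Fin (N + 1), i ≤ j → rho (x i) ≤ rho (x j)

namespace IsRankedListing

variable [PartialOrder β] {N : ℕ} {x : Fin (N + 1) → β}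

lemma mem_Iset_iff (hx : IsRankedListing x) {k : Fin (N + 1)} {j : ℕ} :
    x k ∈ Iset x j ↔ (k : ℕ) ≤ j :=
  ⟨fun ⟨_, hk', hxk⟩ => hx.bijective.1 hxk ▸ hk', fun hk => ⟨k, hk, rfl⟩⟩

lemma rho_le_of_mem_Iset (hx : IsRankedListing x) {j : Fin (N + 1)} {z : β}
    (hz : z ∈ Iset x j) : rho z ≤ rho (x j) := by
  obtain ⟨k, hk, rfl⟩ := hz
  exact hx.rho_le_rho k j hk

lemma not_mem_Iset_pred (hx : IsRankedListing x) {j : Fin (N + 1)} (hj : 0 < (j : ℕ)) :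
    x j ∉ Iset x (j - 1) := by
  rw [hx.mem_Iset_iff]
  omega

variable [Finite β]

lemma isLowerSet_Iset (hx : IsRankedListing x) (j : ℕ) : IsLowerSet (Iset x j) := by
  rintro _ z' hle ⟨k, hk : (k : ℕ) ≤ j, rfl⟩
  obtain ⟨k', rfl⟩ := hx.bijective.2 z'
  refine hx.mem_Iset_iff.2 (not_lt.1 fun hk' => ?_)
  have := eq_of_le_of_rho_le hle (hx.rho_le_rho k k' (by rw [Fin.le_def]; omega))
  rw [hx.bijective.1 this] at hk'
  omega

lemma Iio_subset_Iset_pred (hx : IsRankedListing x) (j : Fin (N + 1)) :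
    Set.Iio (x j) ⊆ Iset x (j - 1) := by
  intro z hz
  obtain ⟨k, rfl⟩ := hx.bijective.2 z
  refine hx.mem_Iset_iff.2 ?_
  have : ¬ j ≤ k := fun hjk => (rho_strictMono hz).not_ge (hx.rho_le_rho j k hjk)
  rw [Fin.le_def] at this
  omega

lemma eq_of_mem_Iset_of_le (hx : IsRankedListing x) {j : Fin (N + 1)} {z : β}
    (hz : z ∈ Iset x j) (hle : x j ≤ z) : z = x j :=
  (eq_of_le_of_rho_le hle (hx.rho_le_of_mem_Iset hz)).symm

lemma apply_zero [OrderBot β] (hx : IsRankedListing x) : x 0 = ⊥ := by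
  obtain ⟨k, hk⟩ := hx.bijective.2 ⊥
  exact (eq_of_le_of_rho_le bot_le (hk ▸ hx.rho_le_rho 0 k (Fin.zero_le k))).symm

lemma apply_last [OrderTop β] (hx : IsRankedListing x) : x (Fin.last N) = ⊤ := by
  obtain ⟨k, hk⟩ := hx.bijective.2 ⊤
  exact eq_of_le_of_rho_le le_top (hk ▸ hx.rho_le_rho k _ (Fin.le_last k))

lemma top_not_mem_Iset [OrderTop β] (hx : IsRankedListing x) {j : ℕ} (hj : j < N) :
    (⊤ : β) ∉ Iset x j := by
  rw [← hx.apply_last, hx.mem_Iset_iff, Fin.val_last]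
  omega

end IsRankedListing

namespace IsSFS

variable [PartialOrder α] [PartialOrder β] {φ : α → β}

lemma map_bot [OrderBot α] [OrderBot β] (hφ : IsSFS φ) : φ ⊥ = ⊥ := by
  obtain ⟨y, hy⟩ := hφ.2.2.1 ⊥
  exact le_bot_iff.1 (hy ▸ hφ.1 bot_le)

lemma exists_isChain_image_eq [Finite α] [Finite β] (hφ : IsSFS φ) (c : Finset β)
    (hc : IsChain (· ≤ ·) (c : Set β)) :
    ∃ d : Finset α, IsChain (· ≤ ·) (d : Set α) ∧ d.image φ = c := by
  induction c using Finset.induction_on_max_value (f := (rho : β → ℕ)) with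
  | empty => exact ⟨∅, by simp, by simp⟩
  | insert b c hb hmax ih =>
    rw [Finset.coe_insert] at hc
    obtain ⟨d, hd, rfl⟩ := ih (hc.mono (Set.subset_insert _ _))
    -- `b` has maximal rank in the chain, so it lies above `φ` of the top of `d`
    obtain ⟨y, hy, hyb⟩ : ∃ y, (∀ a ∈ d, a ≤ y) ∧ φ y = b := by
      rcases d.eq_empty_or_nonempty with rfl | hne
      · obtain ⟨y, hy⟩ := hφ.2.2.1 b
        exact ⟨y, by simp, hy⟩
      obtain ⟨m, hm, hmax'⟩ := exists_greatest_of_isChain hd hne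
      have hmb : φ m ≤ b := le_of_rho_le_of_isChain hc (Or.inr (by simpa using ⟨m, hm, rfl⟩))
        (Set.mem_insert _ _) (hmax _ (Finset.mem_image_of_mem φ hm))
      obtain ⟨y, hmy, hyb, -⟩ := hφ.2.2.2.1 m b hmb
      exact ⟨y, fun a ha => (hmax' a ha).trans hmy, hyb⟩
    refine ⟨insert y d, ?_, by rw [Finset.image_insert, hyb]⟩
    rw [Finset.coe_insert]
    exact hd.insert fun a ha _ => Or.inr (hy a ha)

end IsSFS

namespace ExtP

lemma not_inr_le_inl {A : Type} [PartialOrder A] [PartialOrder β] {σ : A → β} {G : Set β} {y : A}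
    {w : {v : β // v ∉ G}} : ¬ (⟨.inr w⟩ : ExtP σ G) ≤ ⟨.inl y⟩ := id

end ExtP

/-- `B_j` is `ExtPoset φ {x_0, …, x_j}`: the lower order ideal `G` of `B` is replaced by
`φ⁻¹(G)`, with `y ≤ w` for `y ∈ φ⁻¹(G)`, `w ∈ B ∖ G` iff `φ(y') ≤ w` for some `y' ≥ y`. -/
abbrev ExtPoset [PartialOrder α] [PartialOrder β] (φ : α → β) (G : Set β) : Type :=
  ExtP (fun y : ↥(φ ⁻¹' G) => φ (y : α)) G

namespace ExtPoset

variable [PartialOrder α] [PartialOrder β] {φ : α → β} {G : Set β}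

def leftPart (C : Finset (ExtPoset φ G)) : Finset α :=
  (C.map ExtP.equivSum.toEmbedding).toLeft.map (Function.Embedding.subtype _)

def rightPart (C : Finset (ExtPoset φ G)) : Finset β :=
  (C.map ExtP.equivSum.toEmbedding).toRight.map (Function.Embedding.subtype _)

def ofParts (d : Finset α) (e : Finset β) : Finset (ExtPoset φ G) :=
  ((d.subtype (· ∈ φ ⁻¹' G)).disjSum (e.subtype (· ∉ G))).map ExtP.equivSum.symm.toEmbedding

@[simp] lemma mem_leftPart {C : Finset (ExtPoset φ G)} {a : α} :
    a ∈ leftPart C ↔ ∃ h : φ a ∈ G, (⟨.inl ⟨a, h⟩⟩ : ExtPoset φ G) ∈ C := by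
  simp [leftPart, ExtP.equivSum]

@[simp] lemma mem_rightPart {C : Finset (ExtPoset φ G)} {b : β} :
    b ∈ rightPart C ↔ ∃ h : b ∉ G, (⟨.inr ⟨b, h⟩⟩ : ExtPoset φ G) ∈ C := by
  simp [rightPart, ExtP.equivSum]

@[simp] lemma inl_mem_ofParts {d : Finset α} {e : Finset β} {y : ↥(φ ⁻¹' G)} :
    (⟨.inl y⟩ : ExtPoset φ G) ∈ ofParts d e ↔ (y : α) ∈ d := by
  simp [ofParts, ExtP.equivSum]

@[simp] lemma inr_mem_ofParts {d : Finset α} {e : Finset β} {w : {v : β // v ∉ G}} :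
    (⟨.inr w⟩ : ExtPoset φ G) ∈ ofParts d e ↔ (w : β) ∈ e := by
  simp [ofParts, ExtP.equivSum]

lemma ofParts_leftPart_rightPart (C : Finset (ExtPoset φ G)) :
    ofParts (leftPart C) (rightPart C) = C := by
  ext ⟨y | w⟩
  · simp only [inl_mem_ofParts, mem_leftPart]
    exact ⟨fun ⟨_, h⟩ => h, fun h => ⟨y.2, h⟩⟩
  · simp only [inr_mem_ofParts, mem_rightPart]
    exact ⟨fun ⟨_, h⟩ => h, fun h => ⟨w.2, h⟩⟩

lemma leftPart_ofParts {d : Finset α} {e : Finset β} (hd : ∀ a ∈ d, φ a ∈ G) :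
    leftPart (ofParts (φ := φ) (G := G) d e) = d := by
  ext a
  simpa using fun ha => hd a ha

lemma rightPart_ofParts {d : Finset α} {e : Finset β} (he : ∀ b ∈ e, b ∉ G) :
    rightPart (ofParts (φ := φ) (G := G) d e) = e := by
  ext b
  simpa using fun hb => he b hb

lemma card_ofParts {d : Finset α} {e : Finset β} (hd : ∀ a ∈ d, φ a ∈ G)
    (he : ∀ b ∈ e, b ∉ G) : (ofParts (φ := φ) (G := G) d e).card = d.card + e.card := by
  simp [ofParts, Finset.card_subtype, Finset.filter_true_of_mem hd,
    Finset.filter_true_of_mem he]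

section Chains

variable {C : Finset (ExtPoset φ G)}

lemma isChain_leftPart (hC : IsChain (· ≤ ·) (C : Set (ExtPoset φ G))) :
    IsChain (· ≤ ·) (leftPart C : Set α) := by
  intro a ha b hb hab
  obtain ⟨ha, haC⟩ := mem_leftPart.1 ha
  obtain ⟨hb, hbC⟩ := mem_leftPart.1 hb
  exact hC haC hbC fun h => hab (by simpa using h)

lemma isChain_rightPart (hC : IsChain (· ≤ ·) (C : Set (ExtPoset φ G))) :
    IsChain (· ≤ ·) (rightPart C : Set β) := by
  intro a ha b hb hab
  obtain ⟨ha, haC⟩ := mem_rightPart.1 ha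
  obtain ⟨hb, hbC⟩ := mem_rightPart.1 hb
  exact hC haC hbC fun h => hab (by simpa using h)

lemma isChain_ofParts {d : Finset α} {e : Finset β} (hd : IsChain (· ≤ ·) (d : Set α))
    (he : IsChain (· ≤ ·) (e : Set β)) (hde : ∀ a ∈ d, ∀ b ∈ e, φ a ≤ b) :
    IsChain (· ≤ ·) (ofParts (φ := φ) (G := G) d e : Set (ExtPoset φ G)) := by
  rintro ⟨y | w⟩ hp ⟨y' | w'⟩ hq hpq <;>
    simp only [Finset.mem_coe, inl_mem_ofParts, inr_mem_ofParts] at hp hq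
  · exact hd hp hq fun h => hpq (by rw [Subtype.ext h])
  · exact Or.inl ⟨y, le_rfl, hde _ hp _ hq⟩
  · exact Or.inr ⟨y', le_rfl, hde _ hq _ hp⟩
  · exact he hp hq fun h => hpq (by rw [Subtype.ext h])

lemma map_le_of_isChain (hφ : Monotone φ) (hC : IsChain (· ≤ ·) (C : Set (ExtPoset φ G)))
    {y : ↥(φ ⁻¹' G)} {w : {v : β // v ∉ G}} (hy : ⟨.inl y⟩ ∈ C) (hw : ⟨.inr w⟩ ∈ C) :
    φ y ≤ w := by
  obtain ⟨y', hyy', hy'w⟩ := (hC.total hy hw).resolve_right ExtP.not_inr_le_inl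
  exact (hφ hyy').trans hy'w

lemma map_le_of_mem_leftPart_of_fiber (hφ : Monotone φ) {ξ : β}
    (hξmax : ∀ b ∈ G, ξ ≤ b → b = ξ) (hC : IsChain (· ≤ ·) (C : Set (ExtPoset φ G)))
    {y : ↥(φ ⁻¹' G)} (hy : ⟨.inl y⟩ ∈ C) (hyξ : φ y = ξ) {a : α} (ha : a ∈ leftPart C) :
    φ a ≤ ξ := by
  obtain ⟨haG, haC⟩ := mem_leftPart.1 ha
  rcases hC.total haC hy with h | h
  · exact hyξ ▸ hφ h
  · exact (hξmax _ haG (hyξ ▸ hφ h)).le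

lemma lt_of_mem_rightPart_of_fiber (hφ : Monotone φ)
    (hC : IsChain (· ≤ ·) (C : Set (ExtPoset φ G))) {y : ↥(φ ⁻¹' G)} (hy : ⟨.inl y⟩ ∈ C)
    {b : β} (hb : b ∈ rightPart C) : φ y < b := by
  obtain ⟨hbG, hbC⟩ := mem_rightPart.1 hb
  exact lt_of_le_of_ne (map_le_of_isChain hφ hC hy hbC) fun h => hbG (h ▸ y.2)

lemma map_lt_of_mem_leftPart_of_inr (hφ : Monotone φ)
    (hC : IsChain (· ≤ ·) (C : Set (ExtPoset φ G))) {w : {v : β // v ∉ G}} (hw : ⟨.inr w⟩ ∈ C)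
    {a : α} (ha : a ∈ leftPart C) : φ a < w := by
  obtain ⟨haG, haC⟩ := mem_leftPart.1 ha
  exact lt_of_le_of_ne (map_le_of_isChain hφ hC haC hw) fun h => w.2 (h ▸ haG)

lemma le_of_mem_rightPart_of_inr (hC : IsChain (· ≤ ·) (C : Set (ExtPoset φ G)))
    {w : {v : β // v ∉ G}} (hG : Set.Iio (w : β) ⊆ G) (hw : ⟨.inr w⟩ ∈ C) {b : β}
    (hb : b ∈ rightPart C) : (w : β) ≤ b := by
  obtain ⟨hbG, hbC⟩ := mem_rightPart.1 hb
  rcases hC.total hw hbC with h | h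
  · exact h
  obtain rfl | hlt := (show b ≤ w from h).eq_or_lt
  · exact le_rfl
  · exact absurd (hG hlt) hbG

end Chains

section Rank

variable [Finite α] [Finite β]

lemma strictMono_rho_elim (hφ : ∀ y, rho y ≤ rho (φ y)) :
    StrictMono fun p : ExtPoset φ G =>
      p.elt.elim (fun y : ↥(φ ⁻¹' G) => rho (y : α)) fun w : {v : β // v ∉ G} => rho (w : β) := by
  rintro ⟨y | w⟩ ⟨y' | w'⟩ h
  · exact rho_strictMono (lt_of_le_of_ne h.le fun e => h.ne (by rw [Subtype.ext e]))
  · obtain ⟨y'', hy, hw⟩ := h.le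
    have hlt : φ y'' < w' := lt_of_le_of_ne hw fun e => w'.2 (e ▸ y''.2)
    exact (rho_mono (show (y : α) ≤ y'' from hy)).trans_lt
      ((hφ _).trans_lt (rho_strictMono hlt))
  · exact absurd h.le ExtP.not_inr_le_inl
  · exact rho_strictMono (lt_of_le_of_ne h.le fun e => h.ne (by rw [Subtype.ext e]))

lemma rho_inl (hφ : IsSFS φ) (hG : IsLowerSet G) (y : ↥(φ ⁻¹' G)) :
    rho (⟨.inl y⟩ : ExtPoset φ G) = rho (y : α) := by
  refine le_antisymm (rho_le_of_strictMono (strictMono_rho_elim hφ.2.1) _) ?_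
  obtain ⟨c, hc, hcy, hcard⟩ := exists_chain_card_eq_rho (y : α)
  have hcG : ∀ a ∈ c, φ a ∈ G := fun a ha => hG (hφ.1 (hcy ha)) y.2
  have hsub : ((ofParts c ∅ : Finset (ExtPoset φ G)) : Set (ExtPoset φ G)) ⊆ Set.Iic ⟨.inl y⟩ := by
    rintro ⟨y' | w⟩ hp <;> simp only [Finset.mem_coe, inl_mem_ofParts, inr_mem_ofParts] at hp
    · exact hcy hp
    · simp at hp
  have := card_le_rho_add_one (isChain_ofParts hc (by simp) (by simp)) hsub
  rw [card_ofParts hcG (by simp), Finset.card_empty] at this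
  omega

lemma rho_inr (hφ : IsSFS φ) (hG : IsLowerSet G) (w : {v : β // v ∉ G}) :
    rho (⟨.inr w⟩ : ExtPoset φ G) = rho (w : β) := by
  refine le_antisymm (rho_le_of_strictMono (strictMono_rho_elim hφ.2.1) _) ?_
  obtain ⟨c, hc, hcw, hcard⟩ := exists_chain_card_eq_rho (w : β)
  -- lift the part of a maximal chain below `w` that lies in `G` to `Γ`, and keep the rest
  set c₁ := c.filter (· ∈ G)
  set c₂ := c.filter (· ∉ G)
  have hc₁ : IsChain (· ≤ ·) (c₁ : Set β) :=
    hc.mono (Finset.coe_subset.2 (Finset.filter_subset _ _))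
  have hc₂ : IsChain (· ≤ ·) (c₂ : Set β) :=
    hc.mono (Finset.coe_subset.2 (Finset.filter_subset _ _))
  obtain ⟨d, hd, hdc⟩ := hφ.exists_isChain_image_eq c₁ hc₁
  have hdc₁ : ∀ a ∈ d, φ a ∈ c₁ := fun a ha => hdc ▸ Finset.mem_image_of_mem φ ha
  have hdG : ∀ a ∈ d, φ a ∈ G := fun a ha => (Finset.mem_filter.1 (hdc₁ a ha)).2
  have hc₂G : ∀ b ∈ c₂, b ∉ G := fun b hb => (Finset.mem_filter.1 hb).2
  have hdc₂ : ∀ a ∈ d, ∀ b ∈ c₂, φ a ≤ b := fun a ha b hb =>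
    (hc.total (Finset.filter_subset _ _ (hdc₁ a ha)) (Finset.filter_subset _ _ hb)).resolve_right
      fun hba => hc₂G b hb (hG hba (hdG a ha))
  have hsub : ((ofParts d c₂ : Finset (ExtPoset φ G)) : Set (ExtPoset φ G)) ⊆ Set.Iic ⟨.inr w⟩ := by
    rintro ⟨y | b⟩ hp <;> simp only [Finset.mem_coe, inl_mem_ofParts, inr_mem_ofParts] at hp
    · exact ⟨y, le_rfl, hcw (Finset.filter_subset _ _ (hdc₁ _ hp))⟩
    · exact hcw (Finset.filter_subset _ _ hp)
  have := card_le_rho_add_one (isChain_ofParts hd hc₂ hdc₂) hsub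
  rw [card_ofParts hdG hc₂G] at this
  have : c₁.card + c₂.card = c.card := Finset.card_filter_add_card_filter_not _
  have := hdc ▸ Finset.card_image_le (s := d) (f := φ)
  omega

lemma image_rho_eq_union (hφ : IsSFS φ) (hG : IsLowerSet G) (C : Finset (ExtPoset φ G)) :
    rho '' (C : Set (ExtPoset φ G))
      = rho '' (leftPart C : Set α) ∪ rho '' (rightPart C : Set β) := by
  ext k
  simp only [Set.mem_image, Set.mem_union, Finset.mem_coe, mem_leftPart, mem_rightPart]
  constructor
  · rintro ⟨⟨y | w⟩, hp, rfl⟩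
    · exact Or.inl ⟨y, ⟨y.2, hp⟩, (rho_inl hφ hG y).symm⟩
    · exact Or.inr ⟨w, ⟨w.2, hp⟩, (rho_inr hφ hG w).symm⟩
  · rintro (⟨a, ⟨ha, hp⟩, rfl⟩ | ⟨b, ⟨hb, hp⟩, rfl⟩)
    · exact ⟨_, hp, rho_inl hφ hG ⟨a, ha⟩⟩
    · exact ⟨_, hp, rho_inr hφ hG ⟨b, hb⟩⟩

end Rank

section Boundary

variable [Finite α] [Finite β] [OrderTop β] {n : ℕ}

lemma exists_le_rho_eq_sub_one (hφ : IsSFS φ) (hG : IsLowerSet G) (hgB : IsGradedOfRank β n)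
    (htop : ⊤ ∉ G) {p : ExtPoset φ G} (hp : p ≠ ⟨.inr ⟨⊤, htop⟩⟩) :
    ∃ q, p ≤ q ∧ rho q = n - 1 := by
  rcases p with ⟨y | v⟩
  · obtain ⟨w, hyw, hw⟩ := hgB.exists_le_rho_eq_sub_one fun h => htop (h ▸ y.2)
    by_cases hwG : w ∈ G
    · obtain ⟨y', hyy', hy'w, hy'⟩ := hφ.2.2.2.1 y w hyw
      refine ⟨⟨.inl ⟨y', by simpa [Set.mem_preimage, hy'w] using hwG⟩⟩, hyy', ?_⟩
      rw [rho_inl hφ hG, hy', hw]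
    · exact ⟨⟨.inr ⟨w, hwG⟩⟩, ⟨y, le_rfl, hyw⟩, by rw [rho_inr hφ hG, hw]⟩
  · have hv : (v : β) ≠ ⊤ := fun h => hp (by rw [show v = ⟨⊤, htop⟩ from Subtype.ext h])
    obtain ⟨w, hvw, hw⟩ := hgB.exists_le_rho_eq_sub_one hv
    have hwG : w ∉ G := fun h => v.2 (hG hvw h)
    exact ⟨⟨.inr ⟨w, hwG⟩⟩, hvw, by rw [rho_inr hφ hG, hw]⟩

lemma boundary_eq (hφ : IsSFS φ) (hG : IsLowerSet G) (hne : G.Nonempty)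
    (hgB : IsGradedOfRank β n) (htop : ⊤ ∉ G) :
    boundary (ExtPoset φ G) n = {⟨.inr ⟨⊤, htop⟩⟩}ᶜ := by
  obtain ⟨g, hg⟩ := hne
  refine boundary_eq_compl_singleton ?_ (by rw [rho_inr hφ hG, hgB.rho_top])
    (Nat.zero_lt_of_lt (hgB.rho_lt_of_ne_top fun h => htop (h ▸ hg)))
    fun p hp => exists_le_rho_eq_sub_one hφ hG hgB htop hp
  rintro ⟨y | w⟩
  · exact ⟨y, le_rfl, le_top⟩
  · exact (le_top : (w : β) ≤ ⊤)

lemma chainsMin_boundary [OrderBot α] [OrderBot β] (hφ : IsSFS φ) (hG : IsLowerSet G)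
    (hbot : ⊥ ∈ G) (hgB : IsGradedOfRank β n) (htop : ⊤ ∉ G) :
    chainsMin (boundary (ExtPoset φ G) n) = {C : Finset (ExtPoset φ G) |
      IsChain (· ≤ ·) (C : Set (ExtPoset φ G)) ∧ (⊥ : α) ∈ leftPart C ∧ (⊤ : β) ∉ rightPart C} := by
  have hbot' : (⊥ : α) ∈ φ ⁻¹' G := by rwa [Set.mem_preimage, hφ.map_bot]
  have hmin : ∀ z : ExtPoset φ G, ⟨.inl ⟨⊥, hbot'⟩⟩ ≤ z := by
    rintro ⟨y | w⟩
    · exact (bot_le : (⊥ : α) ≤ y)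
    · exact ⟨⟨⊥, hbot'⟩, le_rfl, by simp [hφ.map_bot]⟩
  ext C
  simp only [chainsMin, boundary_eq hφ hG ⟨⊥, hbot⟩ hgB htop, Set.mem_ofPred_eq,
    Set.subset_compl_singleton_iff, Finset.mem_coe, mem_leftPart, mem_rightPart, not_exists]
  refine ⟨fun ⟨htopC, hC, m, hm, hmin'⟩ => ⟨hC, ⟨hbot', ?_⟩, fun _ h => htopC h⟩,
    fun ⟨hC, ⟨_, hbotC⟩, htopC⟩ => ⟨htopC _, hC, _, hbotC, hmin⟩⟩
  rcases m with ⟨y | w⟩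
  · have hy : (y : α) = ⊥ := le_bot_iff.1 (hmin' ⟨.inl ⟨⊥, hbot'⟩⟩)
    rwa [show y = ⟨⊥, hbot'⟩ from Subtype.ext hy] at hm
  · exact absurd (hmin' ⟨.inl ⟨⊥, hbot'⟩⟩) ExtP.not_inr_le_inl

end Boundary

end ExtPoset

section Words

variable (K : Type) [Field K]

lemma uWord_congr {m : ℕ} {S T : Set ℕ} (h : ∀ k, 1 ≤ k → k ≤ m → (k ∈ S ↔ k ∈ T)) :
    uWord K m S = uWord K m T := by
  unfold uWord
  congr 2
  funext i
  rw [propext (h _ (Nat.succ_pos _) i.2)]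

lemma uWord_add (p q : ℕ) (S : Set ℕ) :
    uWord K (p + q) S = uWord K p S * uWord K q {k | k + p ∈ S} := by
  simp only [uWord, List.ofFn_add, List.prod_append, Fin.val_castLE, Fin.val_natAdd,
    Set.mem_ofPred_eq]
  congr 3
  funext i
  simp only [show p + (i : ℕ) + 1 = i + 1 + p by omega]

lemma uWord_one_add (q : ℕ) (S : Set ℕ) :
    uWord K (1 + q) S = (if 1 ∈ S then lb K else la K) * uWord K q {k | k + 1 ∈ S} := by
  rw [uWord_add]
  simp [uWord]

lemma uWord_add_one (m : ℕ) (S : Set ℕ) :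
    uWord K (m + 1) S = uWord K m S * (if m + 1 ∈ S then lb K else la K) := by
  rw [uWord_add]
  simp [uWord, add_comm]

lemma uWord_union_of_le_of_lt {p q : ℕ} {S T : Set ℕ} (hS : ∀ k ∈ S, k ≤ p)
    (hT : ∀ k ∈ T, p < k) :
    uWord K (p + q) (S ∪ T) = uWord K p S * uWord K q {k | k + p ∈ T} := by
  rw [uWord_add]
  congr 1 <;> refine uWord_congr K fun k hk1 hk2 => ?_
  · exact ⟨fun h => h.resolve_right fun hk => by have := hT k hk; omega, Or.inl⟩
  · exact ⟨fun h => h.resolve_left fun hk => by have := hS _ hk; omega, Or.inr⟩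

lemma uWord_shift {γ : Type} (m p : ℕ) (f : γ → ℕ) (s : Set γ) :
    uWord K m {k | k + p ∈ f '' s} = uWord K m ((fun x => f x - p) '' s) :=
  uWord_congr K fun k hk _ => ⟨fun ⟨x, hx, hxk⟩ => ⟨x, hx, by dsimp only; omega⟩,
    fun ⟨x, hx, hxk⟩ => ⟨x, hx, by dsimp only at hxk; omega⟩⟩

lemma uWord_insert_zero (m : ℕ) (S : Set ℕ) : uWord K m (insert 0 S) = uWord K m S :=
  uWord_congr K fun k hk _ => by simp [Nat.pos_iff_ne_zero.1 hk]

lemma upsSet_bot [PartialOrder α] [OrderBot α] [Finite α] (S : Set α) (m : ℕ) :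
    upsSet K S ⊥ m = ∑ᶠ C ∈ chainsIn S ⊥, uWord K m (rho '' (C : Set α)) := by
  simp [upsSet, rho_bot]

end Words

lemma finsum_mem_mul_finsum_mem {ι κ R : Type*} [NonUnitalNonAssocSemiring R] {s : Set ι}
    {t : Set κ} (hs : s.Finite) (ht : t.Finite) (f : ι → R) (g : κ → R) :
    (∑ᶠ i ∈ s, f i) * ∑ᶠ j ∈ t, g j = ∑ᶠ p ∈ s ×ˢ t, f p.1 * g p.2 := by
  rw [finsum_mem_eq_finite_toFinset_sum _ hs, finsum_mem_eq_finite_toFinset_sum _ ht,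
    finsum_mem_eq_finite_toFinset_sum _ (hs.prod ht), Finset.sum_mul_sum,
    ← Set.Finite.toFinset_prod, Finset.sum_product]

namespace ExtPoset

variable (K : Type) [Field K] [PartialOrder α] [Finite α] [PartialOrder β] [Finite β]
  [OrderTop β] {φ : α → β} {G : Set β} {n : ℕ} {ξ : β}

lemma bijOn_parts_of_fiber [OrderBot α] [OrderBot β] (hφ : IsSFS φ) (hG : IsLowerSet G)
    (hgB : IsGradedOfRank β n) (htop : ⊤ ∉ G) (hξ : ξ ∈ G) (hξmax : ∀ b ∈ G, ξ ≤ b → b = ξ) :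
    Set.BijOn (fun C => (leftPart C, insert ξ (rightPart C)))
      {C ∈ chainsMin (boundary (ExtPoset φ G) n) |
        ∃ y : ↥(φ ⁻¹' G), (⟨.inl y⟩ : ExtPoset φ G) ∈ C ∧ φ (y : α) = ξ}
      ({d ∈ chainsIn (φ ⁻¹' Set.Iic ξ) ⊥ | ∃ a ∈ d, φ a = ξ} ×ˢ chainsIn (Set.Ico ξ ⊤) ξ) := by
  have hξtop : ξ < ⊤ := lt_top_iff_ne_top.2 fun h => htop (h ▸ hξ)
  have hdG : ∀ d : Finset α, (d : Set α) ⊆ φ ⁻¹' Set.Iic ξ → ∀ a ∈ d, φ a ∈ G :=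
    fun d hd a ha => hG (hd ha) hξ
  have heG : ∀ e : Finset β, (e : Set β) ⊆ Set.Ico ξ ⊤ → ∀ b ∈ e.erase ξ, b ∉ G :=
    fun e he b hb hbG =>
      (Finset.mem_erase.1 hb).1 (hξmax b hbG (he (Finset.mem_of_mem_erase hb)).1)
  rw [chainsMin_boundary hφ hG (hG bot_le hξ) hgB htop]
  refine Set.InvOn.bijOn (f' := fun p => ofParts p.1 (p.2.erase ξ)) ⟨?_, ?_⟩ ?_ ?_
  · rintro C -
    simp only
    rw [Finset.erase_insert fun h => (mem_rightPart.1 h).1 hξ, ofParts_leftPart_rightPart]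
  · rintro ⟨d, e⟩ ⟨⟨⟨hd, -⟩, -⟩, he, -, hξe⟩
    simp only [Prod.mk.injEq]
    rw [leftPart_ofParts (hdG d hd), rightPart_ofParts (heG e he), Finset.insert_erase hξe]
    exact ⟨rfl, rfl⟩
  · rintro C ⟨⟨hC, hbotC, htopC⟩, y, hy, hyξ⟩
    have hlt : ∀ b ∈ rightPart C, ξ < b := fun b hb =>
      hyξ ▸ lt_of_mem_rightPart_of_fiber hφ.1 hC hy hb
    refine ⟨⟨⟨fun a ha => map_le_of_mem_leftPart_of_fiber hφ.1 hξmax hC hy hyξ ha,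
      isChain_leftPart hC, hbotC⟩, y, mem_leftPart.2 ⟨y.2, hy⟩, hyξ⟩, ?_, ?_,
      Finset.mem_insert_self _ _⟩
    · intro b hb
      rw [Finset.coe_insert] at hb
      rcases hb with rfl | hb
      · exact ⟨le_rfl, hξtop⟩
      · exact ⟨(hlt b hb).le, lt_top_iff_ne_top.2 fun h => htopC (h ▸ hb)⟩
    · rw [Finset.coe_insert]
      exact (isChain_rightPart hC).insert fun b hb _ => Or.inl (hlt b hb).le
  · rintro ⟨d, e⟩ ⟨⟨⟨hdξ, hd, hbotd⟩, a, had, haξ⟩, heξ, he, -⟩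
    refine ⟨⟨isChain_ofParts hd (he.mono (by simp)) fun a ha b hb =>
        (hdξ ha).trans (heξ (Finset.mem_of_mem_erase hb)).1,
      by rwa [leftPart_ofParts (hdG d hdξ)], ?_⟩, ⟨a, hdG d hdξ a had⟩, by simpa using had, haξ⟩
    rw [rightPart_ofParts (heG e heξ)]
    exact fun h => (heξ (Finset.mem_of_mem_erase h)).2.ne rfl

lemma uWord_rho_image_of_fiber (hφ : IsSFS φ) (hG : IsLowerSet G) (hgB : IsGradedOfRank β n)
    (htop : ⊤ ∉ G) (hξ : ξ ∈ G) (hξmax : ∀ b ∈ G, ξ ≤ b → b = ξ)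
    {C : Finset (ExtPoset φ G)} (hC : IsChain (· ≤ ·) (C : Set (ExtPoset φ G)))
    {y : ↥(φ ⁻¹' G)} (hy : ⟨.inl y⟩ ∈ C) (hyξ : φ y = ξ) :
    uWord K (n - 1) (rho '' (C : Set (ExtPoset φ G)))
      = uWord K (rho ξ) (rho '' (leftPart C : Set α))
        * uWord K (n - rho ξ - 1)
          ((fun b => rho b - rho ξ) '' ((insert ξ (rightPart C) : Finset β) : Set β)) := by
  have hn : rho ξ < n := hgB.rho_lt_of_ne_top fun h => htop (h ▸ hξ)
  rw [image_rho_eq_union hφ hG, show n - 1 = rho ξ + (n - rho ξ - 1) by omega,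
    uWord_union_of_le_of_lt K, uWord_shift, Finset.coe_insert, Set.image_insert_eq, Nat.sub_self,
    uWord_insert_zero]
  · rintro _ ⟨a, ha, rfl⟩
    exact (hφ.2.1 a).trans (rho_mono (map_le_of_mem_leftPart_of_fiber hφ.1 hξmax hC hy hyξ ha))
  · rintro _ ⟨b, hb, rfl⟩
    exact rho_strictMono (hyξ ▸ lt_of_mem_rightPart_of_fiber hφ.1 hC hy hb)

theorem finsum_chains_through_fiber [OrderBot α] [OrderBot β] (hφ : IsSFS φ)
    (hG : IsLowerSet G) (hgB : IsGradedOfRank β n) (htop : ⊤ ∉ G) (hξ : ξ ∈ G)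
    (hξmax : ∀ b ∈ G, ξ ≤ b → b = ξ) :
    ∑ᶠ C ∈ {C ∈ chainsMin (boundary (ExtPoset φ G) n) |
        ∃ y : ↥(φ ⁻¹' G), (⟨.inl y⟩ : ExtPoset φ G) ∈ C ∧ φ (y : α) = ξ},
      uWord K (n - 1) (rho '' (C : Set (ExtPoset φ G)))
    = (∑ᶠ d ∈ {d ∈ chainsIn (φ ⁻¹' Set.Iic ξ) ⊥ | ∃ a ∈ d, φ a = ξ},
        uWord K (rho ξ) (rho '' (d : Set α)))
      * upsSet K (Set.Ico ξ ⊤) ξ (n - rho ξ - 1) := by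
  rw [upsSet, finsum_mem_mul_finsum_mem (Set.toFinite _) (Set.toFinite _)]
  refine finsum_mem_eq_of_bijOn _ (bijOn_parts_of_fiber hφ hG hgB htop hξ hξmax) ?_
  rintro C ⟨hCmin, y, hy, hyξ⟩
  rw [chainsMin_boundary hφ hG (hG bot_le hξ) hgB htop] at hCmin
  exact uWord_rho_image_of_fiber K hφ hG hgB htop hξ hξmax hCmin.1 hy hyξ

lemma bijOn_parts_of_inr [OrderBot α] [OrderBot β] (hφ : IsSFS φ) (hG : IsLowerSet G)
    (hgB : IsGradedOfRank β n) (htop : ⊤ ∉ G) (hbot : ⊥ ∈ G) (hξ : ξ ∉ G)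
    (hIio : Set.Iio ξ ⊆ G) :
    Set.BijOn (fun C => (leftPart C, rightPart C))
      {C ∈ chainsMin (boundary (ExtPoset φ G) n) |
        ∃ w : {v : β // v ∉ G}, (⟨.inr w⟩ : ExtPoset φ G) ∈ C ∧ (w : β) = ξ}
      (chainsIn (φ ⁻¹' Set.Iio ξ) ⊥ ×ˢ chainsIn (Set.Ico ξ ⊤) ξ) := by
  have hdG : ∀ d : Finset α, (d : Set α) ⊆ φ ⁻¹' Set.Iio ξ → ∀ a ∈ d, φ a ∈ G :=
    fun d hd a ha => hIio (hd ha)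
  have heG : ∀ e : Finset β, (e : Set β) ⊆ Set.Ico ξ ⊤ → ∀ b ∈ e, b ∉ G :=
    fun e he b hb hbG => hξ (hG (he hb).1 hbG)
  rw [chainsMin_boundary hφ hG hbot hgB htop]
  refine Set.InvOn.bijOn (f' := fun p => ofParts p.1 p.2) ⟨?_, ?_⟩ ?_ ?_
  · rintro C -
    exact ofParts_leftPart_rightPart C
  · rintro ⟨d, e⟩ ⟨⟨hd, -⟩, he, -⟩
    simp only [Prod.mk.injEq]
    exact ⟨leftPart_ofParts (hdG d hd), rightPart_ofParts (heG e he)⟩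
  · rintro C ⟨⟨hC, hbotC, htopC⟩, w, hw, rfl⟩
    refine ⟨⟨fun a ha => map_lt_of_mem_leftPart_of_inr hφ.1 hC hw ha, isChain_leftPart hC,
      hbotC⟩, fun b hb => ⟨le_of_mem_rightPart_of_inr hC hIio hw hb,
        lt_top_iff_ne_top.2 fun h => htopC (h ▸ hb)⟩,
      isChain_rightPart hC, mem_rightPart.2 ⟨w.2, hw⟩⟩
  · rintro ⟨d, e⟩ ⟨⟨hdξ, hd, hbotd⟩, heξ, he, hξe⟩
    refine ⟨⟨isChain_ofParts hd he fun a ha b hb => ((hdξ ha).trans_le (heξ hb).1).le,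
      by rwa [leftPart_ofParts (hdG d hdξ)], ?_⟩, ⟨ξ, hξ⟩, by simpa using hξe, rfl⟩
    rw [rightPart_ofParts (heG e heξ)]
    exact fun h => (heξ h).2.ne rfl

lemma uWord_rho_image_of_inr (hφ : IsSFS φ) (hG : IsLowerSet G) (hgB : IsGradedOfRank β n)
    {C : Finset (ExtPoset φ G)} (hC : IsChain (· ≤ ·) (C : Set (ExtPoset φ G)))
    (htopC : ⊤ ∉ rightPart C) {w : {v : β // v ∉ G}} (hw : ⟨.inr w⟩ ∈ C)
    (hIio : Set.Iio (w : β) ⊆ G) (hrho : 1 ≤ rho (w : β)) :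
    uWord K (n - 1) (rho '' (C : Set (ExtPoset φ G)))
      = uWord K (rho (w : β) - 1) (rho '' (leftPart C : Set α))
        * (lb K * uWord K (n - rho (w : β) - 1)
          ((fun b => rho b - rho (w : β)) '' (rightPart C : Set β))) := by
  have hwC : (w : β) ∈ rightPart C := mem_rightPart.2 ⟨w.2, hw⟩
  have hn : rho (w : β) < n := hgB.rho_lt_of_ne_top fun h => htopC (h ▸ hwC)
  have hle : ∀ k ∈ rho '' (rightPart C : Set β), rho (w : β) ≤ k := by
    rintro _ ⟨b, hb, rfl⟩
    exact rho_mono (le_of_mem_rightPart_of_inr hC hIio hw hb)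
  -- `w` itself contributes the letter `b` in position `rho w`
  have hsucc : {k | k + 1 ∈ {k | k + (rho (w : β) - 1) ∈ rho '' (rightPart C : Set β)}}
      = {k | k + rho (w : β) ∈ rho '' (rightPart C : Set β)} := by
    ext k
    simp only [Set.mem_ofPred_eq, show k + 1 + (rho (w : β) - 1) = k + rho (w : β) by omega]
  rw [image_rho_eq_union hφ hG,
    show n - 1 = (rho (w : β) - 1) + (1 + (n - rho (w : β) - 1)) by omega,
    uWord_union_of_le_of_lt K, uWord_one_add, if_pos ⟨w, hwC, by omega⟩, hsucc, uWord_shift]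
  · rintro _ ⟨a, ha, rfl⟩
    have := (hφ.2.1 a).trans_lt (rho_strictMono (map_lt_of_mem_leftPart_of_inr hφ.1 hC hw ha))
    omega
  · intro k hk
    have := hle k hk
    omega

theorem finsum_chains_through_inr [OrderBot α] [OrderBot β] (hφ : IsSFS φ) (hG : IsLowerSet G)
    (hgB : IsGradedOfRank β n) (htop : ⊤ ∉ G) (hbot : ⊥ ∈ G) (hξ : ξ ∉ G)
    (hIio : Set.Iio ξ ⊆ G) :
    ∑ᶠ C ∈ {C ∈ chainsMin (boundary (ExtPoset φ G) n) |
        ∃ w : {v : β // v ∉ G}, (⟨.inr w⟩ : ExtPoset φ G) ∈ C ∧ (w : β) = ξ},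
      uWord K (n - 1) (rho '' (C : Set (ExtPoset φ G)))
    = upsSet K (φ ⁻¹' Set.Iio ξ) ⊥ (rho ξ - 1)
      * (lb K * upsSet K (Set.Ico ξ ⊤) ξ (n - rho ξ - 1)) := by
  have hrho : 1 ≤ rho ξ :=
    Nat.one_le_iff_ne_zero.2 fun h => hξ (by rwa [eq_bot_of_rho_eq_zero h])
  rw [upsSet_bot, upsSet, mul_finsum_mem' _ _ (Set.toFinite _),
    finsum_mem_mul_finsum_mem (Set.toFinite _) (Set.toFinite _)]
  refine finsum_mem_eq_of_bijOn _ (bijOn_parts_of_inr hφ hG hgB htop hbot hξ hIio) ?_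
  rintro C ⟨hCmin, w, hw, rfl⟩
  rw [chainsMin_boundary hφ hG hbot hgB htop] at hCmin
  exact uWord_rho_image_of_inr K hφ hG hgB hCmin.1 hCmin.2.2 hw hIio hrho

end ExtPoset

lemma upsSet_preimage_Iic (K : Type) [Field K] [PartialOrder α] [Finite α] [OrderBot α]
    [PartialOrder β] [Finite β] {φ : α → β} (hφ : ∀ y, rho y ≤ rho (φ y)) {ξ : β}
    (hξ : 1 ≤ rho ξ) :
    upsSet K (φ ⁻¹' Set.Iic ξ) ⊥ (rho ξ)
      = (∑ᶠ d ∈ {d ∈ chainsIn (φ ⁻¹' Set.Iic ξ) ⊥ | ∃ a ∈ d, φ a = ξ},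
          uWord K (rho ξ) (rho '' (d : Set α)))
        + upsSet K (φ ⁻¹' Set.Iio ξ) ⊥ (rho ξ - 1) * la K := by
  have hdiff : chainsIn (φ ⁻¹' Set.Iic ξ) ⊥ \ {d | ∃ a ∈ d, φ a = ξ}
      = chainsIn (φ ⁻¹' Set.Iio ξ) ⊥ := by
    ext d
    simp only [chainsIn, Set.mem_sdiff, Set.mem_ofPred_eq, not_exists, not_and]
    constructor
    · rintro ⟨⟨hd, hc, hb⟩, hne⟩
      exact ⟨fun a ha => lt_of_le_of_ne (hd ha) (hne a ha), hc, hb⟩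
    · rintro ⟨hd, hc, hb⟩
      exact ⟨⟨fun a ha => (hd ha).le, hc, hb⟩, fun a ha => (hd ha).ne⟩
  obtain ⟨r, hr⟩ : ∃ r, rho ξ = r + 1 := ⟨rho ξ - 1, by omega⟩
  rw [upsSet_bot, upsSet_bot,
    ← finsum_mem_inter_add_sdiff {d | ∃ a ∈ d, φ a = ξ} (Set.toFinite _), hdiff,
    finsum_mem_mul' _ _ (Set.toFinite _), hr, Nat.add_sub_cancel]
  congr 1
  refine finsum_mem_congr rfl fun d hd => ?_
  rw [uWord_add_one, if_neg]
  rintro ⟨a, ha, hak⟩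
  have := (hφ a).trans_lt (rho_strictMono (hd.1 ha))
  omega

theorem local_flag_enumerator_identity_general
    (K : Type) [Field K]
    (α β : Type) [PartialOrder α] [Finite α] [OrderBot α]
    [PartialOrder β] [Finite β] [OrderBot β] [OrderTop β] (n N : ℕ)
    (hB : IsEulerianOfRank β n)
    (φ : α → β) (hφ : IsSFS φ)
    (x : Fin (N + 1) → β) (hbij : Function.Bijective x)
    (hmono : ∀ i j : Fin (N + 1), i ≤ j → rho (x i) ≤ rho (x j)) :
    ∀ (i : ℕ) (_ : 0 < i) (hi2 : i < N) (xi : β),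
      xi = x ⟨i, Nat.lt_succ_of_lt hi2⟩ →
      (upsSet K (φ ⁻¹' Set.Iic xi) ⊥ (rho xi)
          - upsSet K (φ ⁻¹' Set.Iio xi) ⊥ (rho xi - 1) * (la K + lb K))
        * upsSet K (Set.Ico xi ⊤) xi (n - rho xi - 1)
      = (∑ᶠ C ∈ {C ∈ chainsMin (boundary (InterPoset φ x i) n) |
            ∃ y : (φ ⁻¹' Iset x i),
              (⟨.inl y⟩ : InterPoset φ x i) ∈ C ∧ φ (y : α) = xi},
          uWord K (n - 1) (rho '' (C : Set (InterPoset φ x i))))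
        - ∑ᶠ C ∈ {C ∈ chainsMin (boundary (InterPoset φ x (i - 1)) n) |
            ∃ w : {v : β // v ∉ Iset x (i - 1)},
              (⟨.inr w⟩ : InterPoset φ x (i - 1)) ∈ C ∧ (w : β) = xi},
          uWord K (n - 1) (rho '' (C : Set (InterPoset φ x (i - 1)))) := by
  rintro i hi hiN _ rfl
  set j : Fin (N + 1) := ⟨i, Nat.lt_succ_of_lt hiN⟩
  have hx : IsRankedListing x := ⟨hbij, hmono⟩
  have hgB : IsGradedOfRank β n := hB.2.2.1
  have hbot : (⊥ : β) ∈ Iset x (i - 1) := hx.apply_zero ▸ hx.mem_Iset_iff.2 (Nat.zero_le _)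
  have hξ : x j ∉ Iset x (i - 1) := hx.not_mem_Iset_pred (j := j) hi
  rw [ExtPoset.finsum_chains_through_fiber K hφ (hx.isLowerSet_Iset i) hgB
      (hx.top_not_mem_Iset hiN) (hx.mem_Iset_iff.2 le_rfl)
      fun b hb hle => hx.eq_of_mem_Iset_of_le (j := j) hb hle,
    ExtPoset.finsum_chains_through_inr K hφ (hx.isLowerSet_Iset _) hgB
      (hx.top_not_mem_Iset (by omega)) hbot hξ (hx.Iio_subset_Iset_pred j),
    upsSet_preimage_Iic K hφ.2.1
      (Nat.one_le_iff_ne_zero.2 fun h => hξ (by rwa [eq_bot_of_rho_eq_zero h]))]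
  noncomm_ring

/-- Let `φ : Γ → B` be a strong formal subdivision of rank `0`, `Γ`
lower Eulerian, `B` Eulerian of rank `n`, `x_0, …, x_N` a listing of `B` with weakly
increasing ranks, with intermediate posets `B_i` and intermediate maps `φ_i`.  Then for
`0 < i < N`:
`ℓ^Υ_{Γ_{x_i}} · Υ_{[x_i, 1̂)}
  = ∑_{C chain of ∂B_i meeting φ_i⁻¹(x_i)} u_{ρ(C)} - ∑_{C chain of ∂B_{i-1} ∋ x_i} u_{ρ(C)}`,
where the local flag enumerator is `ℓ^Υ_P = Υ_P - Υ_{∂P}·(a + b)` (the image of the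
local `ab`-index `ℓ^Ψ_P = Ψ_P - Ψ_{∂P}·a` under `a ↦ a + b`, `b ↦ b`) and
`Γ_{x_i} = φ⁻¹[0̂, x_i]` has boundary `φ⁻¹[0̂, x_i)`. -/
theorem local_flag_enumerator_identity
    (K : Type) [Field K] [CharZero K]
    (α β : Type) [PartialOrder α] [Finite α] [OrderBot α]
    [PartialOrder β] [Finite β] [OrderBot β] [OrderTop β] (n N : ℕ)
    (hΓ : IsLowerEulerianOfRank α n) (hB : IsEulerianOfRank β n)
    (φ : α → β) (hφ : IsSFS φ)
    (x : Fin (N + 1) → β) (hbij : Function.Bijective x)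
    (hmono : ∀ i j : Fin (N + 1), i ≤ j → rho (x i) ≤ rho (x j)) :
    ∀ (i : ℕ) (_ : 0 < i) (hi2 : i < N) (xi : β),
      xi = x ⟨i, Nat.lt_succ_of_lt hi2⟩ →
      (upsSet K (φ ⁻¹' Set.Iic xi) ⊥ (rho xi)
          - upsSet K (φ ⁻¹' Set.Iio xi) ⊥ (rho xi - 1) * (la K + lb K))
        * upsSet K (Set.Ico xi ⊤) xi (n - rho xi - 1)
      = (∑ᶠ C ∈ {C ∈ chainsMin (boundary (InterPoset φ x i) n) |
            ∃ y : (φ ⁻¹' Iset x i),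
              (⟨.inl y⟩ : InterPoset φ x i) ∈ C ∧ φ (y : α) = xi},
          uWord K (n - 1) (rho '' (C : Set (InterPoset φ x i))))
        - ∑ᶠ C ∈ {C ∈ chainsMin (boundary (InterPoset φ x (i - 1)) n) |
            ∃ w : {v : β // v ∉ Iset x (i - 1)},
              (⟨.inr w⟩ : InterPoset φ x (i - 1)) ∈ C ∧ (w : β) = xi},
          uWord K (n - 1) (rho '' (C : Set (InterPoset φ x (i - 1)))) :=
  local_flag_enumerator_identity_general K α β n N hB φ hφ x hbij hmono

end CDIndex
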